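/- Let V be a variety of bounded lattices and let W be a variety of lattices. If V ⊄ W and V ⊄ W^d (i.e. some member of V, as a lattice, lies outside W, and some member of V lies outside W^d), then there exist a countable bounded lattice L ∈ V and a finite spanning partial sublattice K of L (with 0_L, 1_L ∈ K) such that K is not a partial sublattice of any lattice belonging to W ∪ W^d. -/

import Mathlib

set_option linter.unusedVariables false

universe u v

/-- A congruence of a lattice: an equivalence relation compatible with `⊔` and `⊓`. -/
structure LatCon (L : Type u) [Lattice L] extends Setoid L where
  sup_comp : ∀ {a b c d : L}, r a b → r c d → r (a ⊔ c) (b ⊔ d)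
  inf_comp : ∀ {a b c d : L}, r a b → r c d → r (a ⊓ c) (b ⊓ d)

namespace LatCon

variable {L : Type u} [Lattice L]

theorem ext' {θ ψ : LatCon L} (h : θ.r = ψ.r) : θ = ψ := by
  obtain ⟨⟨r₁, h₁⟩, _, _⟩ := θ
  obtain ⟨⟨r₂, h₂⟩, _, _⟩ := ψ
  cases h
  rfl

instance : PartialOrder (LatCon L) where
  le θ ψ := ∀ ⦃a b : L⦄, θ.r a b → ψ.r a b
  le_refl θ a b h := h
  le_trans θ₁ θ₂ θ₃ h₁ h₂ a b h := h₂ (h₁ h)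
  le_antisymm θ ψ h₁ h₂ :=
    ext' (funext fun a => funext fun b => propext ⟨fun h => h₁ h, fun h => h₂ h⟩)

instance : InfSet (LatCon L) where
  sInf S :=
    { r := fun a b => ∀ θ ∈ S, θ.r a b
      iseqv := ⟨fun a θ _ => θ.iseqv.refl a,
        fun h θ hθ => θ.iseqv.symm (h θ hθ),
        fun h₁ h₂ θ hθ => θ.iseqv.trans (h₁ θ hθ) (h₂ θ hθ)⟩
      sup_comp := fun h₁ h₂ θ hθ => θ.sup_comp (h₁ θ hθ) (h₂ θ hθ)
      inf_comp := fun h₁ h₂ θ hθ => θ.inf_comp (h₁ θ hθ) (h₂ θ hθ) }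

instance : CompleteLattice (LatCon L) :=
  completeLatticeOfInf _ fun S =>
    ⟨fun θ hθ a b h => h θ hθ, fun ψ hψ a b h θ hθ => hψ hθ h⟩

end LatCon

/-- The principal congruence `Θ_L(x, y)` generated by a pair of elements. -/
def latConPrincipal {L : Type u} [Lattice L] (x y : L) : LatCon L :=
  sInf {θ : LatCon L | θ.r x y}

/-- Compact elements of a complete lattice, with the meaning this name had in Mathlib (Dec 2024). -/
def CompleteLattice.IsCompactElement {α : Type*} [CompleteLattice α] (k : α) :=
  ∀ s : Set α, k ≤ sSup s → ∃ t : Finset α, ↑t ⊆ s ∧ k ≤ t.sup id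

/-- The (∨,0)-semilattice of compact (i.e., finitely generated) congruences of a lattice. -/
abbrev ConC (L : Type u) [Lattice L] : Type u :=
  {θ : LatCon L // CompleteLattice.IsCompactElement θ}

/-- The congruence of `B` generated by the image of a congruence under a lattice
homomorphism `f : A → B`; `Con_c f` is the restriction of this map to compact congruences. -/
def conMap {A : Type u} {B : Type v} [Lattice A] [Lattice B] (f : LatticeHom A B)
    (θ : LatCon A) : LatCon B :=
  sInf {ψ : LatCon B | ∀ a b : A, θ.r a b → ψ.r (f a) (f b)}

/-- The kernel congruence of a lattice homomorphism. -/
def latKer {A : Type u} {B : Type v} [Lattice A] [Lattice B] (f : LatticeHom A B) :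
    LatCon A where
  r a b := f a = f b
  iseqv := ⟨fun _ => rfl, Eq.symm, Eq.trans⟩
  sup_comp := fun h₁ h₂ => by simp only [map_sup]; rw [h₁, h₂]
  inf_comp := fun h₁ h₂ => by simp only [map_inf]; rw [h₁, h₂]

/-- A lattice is simple if it has exactly two congruences. -/
def SimpleLat (L : Type u) [Lattice L] : Prop :=
  ∃ θ ψ : LatCon L, θ ≠ ψ ∧ ∀ χ : LatCon L, χ = θ ∨ χ = ψ

/-- A bundled lattice. -/
structure BLat : Type (u + 1) where
  carrier : Type u
  [str : Lattice carrier]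

attribute [instance] BLat.str

instance : CoeSort BLat.{u} (Type u) := ⟨BLat.carrier⟩

/-- The order-dual of a bundled lattice. -/
def BLat.dual (X : BLat.{u}) : BLat.{u} := ⟨(↥X)ᵒᵈ⟩

/-- A bundled bounded lattice. -/
structure BdLat : Type (u + 1) where
  carrier : Type u
  [str : Lattice carrier]
  [bdd : BoundedOrder carrier]

attribute [instance] BdLat.str BdLat.bdd

instance : CoeSort BdLat.{u} (Type u) := ⟨BdLat.carrier⟩

/-- The underlying (bundled) lattice of a bounded lattice. -/
def BdLat.toBLat (X : BdLat.{u}) : BLat.{u} := ⟨X.carrier⟩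

/-- A class of lattices is a variety if it is closed under homomorphic images,
sublattices and arbitrary direct products. -/
def IsLatVariety (V : BLat.{u} → Prop) : Prop :=
  (∀ (X Y : BLat.{u}) (f : LatticeHom X Y), Function.Surjective f → V X → V Y) ∧
  (∀ (X Y : BLat.{u}) (f : LatticeHom X Y), Function.Injective f → V Y → V X) ∧
  (∀ (ι : Type u) (F : ι → BLat.{u}), (∀ i, V (F i)) → V ⟨∀ i, F i⟩)

/-- A class of bounded lattices is a variety if it is closed under homomorphic images
(under 0,1-lattice homomorphisms), bounded sublattices and arbitrary direct products. -/
def IsBddLatVariety (V : BdLat.{u} → Prop) : Prop :=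
  (∀ (X Y : BdLat.{u}) (f : BoundedLatticeHom X Y), Function.Surjective f → V X → V Y) ∧
  (∀ (X Y : BdLat.{u}) (f : BoundedLatticeHom X Y), Function.Injective f → V Y → V X) ∧
  (∀ (ι : Type u) (F : ι → BdLat.{u}), (∀ i, V (F i)) → V ⟨∀ i, F i⟩)

/-- `VarMem K X` states that `X` belongs to the variety `Var K` generated by `K`,
i.e. to every variety containing `K`. -/
def VarMem (K X : BLat.{u}) : Prop :=
  ∀ V : BLat.{u} → Prop, IsLatVariety V → V K → V X

/-- `Con_c A` and `Con_c B` are isomorphic (∨,0)-semilattices; since finite joins and `0` are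
determined by the order, this is equivalent to the existence of an order isomorphism. -/
def ConcIso (A : BLat.{u}) (B : BLat.{v}) : Prop :=
  Nonempty (ConC ↥A ≃o ConC ↥B)

/-- `K`, viewed as a partial sublattice of `L` (joins and meets of elements of `K` are
defined exactly when they lie in `K`), embeds into the lattice `M`: there is a one-to-one
map preserving all joins and meets that are defined in `K`. -/
def PartialSublatEmbeds {L : Type u} [Lattice L] (K : Set L) (M : Type v) [Lattice M] : Prop :=
  ∃ h : K → M, Function.Injective h ∧
    (∀ (x y : K) (hxy : (x : L) ⊔ (y : L) ∈ K), h ⟨(x : L) ⊔ (y : L), hxy⟩ = h x ⊔ h y) ∧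
    (∀ (x y : K) (hxy : (x : L) ⊓ (y : L) ∈ K), h ⟨(x : L) ⊓ (y : L), hxy⟩ = h x ⊓ h y)

/-!
A lattice lies in the variety `W` as soon as each of its finite partial sublattices embeds into
a member of `W`: the partial embeddings, indexed by the finite subsets, assemble into an
embedding into a reduced product of members of `W` (over the filter of cofinal finite subsets;
no ultrafilter is needed since only equations have to be transported). Hence `A ∈ V \ W` has a
finite `K₁ ⊆ A`, and `B ∈ V` with `Bᵈ ∉ W` a finite `K₂ ⊆ Bᵈ`, embeddable into no member of `W`.
In `A × B ∈ V` put `K₁` on the edge `A × {0}` and `K₂` on `{1} × B`, and add `0, 1`. Since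
`x ↦ (x, 0)` and `y ↦ (1, y)` are lattice embeddings, an embedding of this set into `M ∈ W`
restricts to one of `K₁`, and one into `M` with `Mᵈ ∈ W` dualizes to one of `K₂` into `Mᵈ`.
Finally replace `A × B` by the countable bounded sublattice generated by this finite set.
-/

open OrderDual

namespace PartialSublatEmbeds

variable {L L' M : Type*} [Lattice L] [Lattice L'] [Lattice M]

theorem mono {K K' : Set L} (hKK' : K ⊆ K') (h : PartialSublatEmbeds K' M) :
    PartialSublatEmbeds K M := by
  obtain ⟨g, hg, hgsup, hginf⟩ := h
  exact ⟨g ∘ Set.inclusion hKK', hg.comp (Set.inclusion_injective hKK'),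
    fun x y hxy => hgsup (Set.inclusion hKK' x) (Set.inclusion hKK' y) (hKK' hxy),
    fun x y hxy => hginf (Set.inclusion hKK' x) (Set.inclusion hKK' y) (hKK' hxy)⟩

theorem dual {K : Set L} (h : PartialSublatEmbeds K M) :
    PartialSublatEmbeds (ofDual ⁻¹' K : Set Lᵒᵈ) Mᵒᵈ := by
  obtain ⟨g, hg, hgsup, hginf⟩ := h
  exact ⟨fun x => toDual (g ⟨ofDual x, x.2⟩),
    fun x y hxy => Subtype.ext (congrArg Subtype.val (hg hxy)),
    fun x y hxy => hginf ⟨_, x.2⟩ ⟨_, y.2⟩ hxy, fun x y hxy => hgsup ⟨_, x.2⟩ ⟨_, y.2⟩ hxy⟩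

theorem image_iff {K : Set L} (f : LatticeHom L L') (hf : Function.Injective f) :
    PartialSublatEmbeds (f '' K) M ↔ PartialSublatEmbeds K M := by
  let e : K ≃ f '' K := Equiv.Set.image f K hf
  have he : ∀ x, (e x : L') = f x := fun _ => rfl
  constructor
  · rintro ⟨g, hg, hgsup, hginf⟩
    refine ⟨g ∘ e, hg.comp e.injective, fun x y hxy => ?_, fun x y hxy => ?_⟩
    · refine (congrArg g (Subtype.ext (map_sup f (x : L) y))).trans
        (hgsup (e x) (e y) ?_)
      rw [he, he, ← map_sup]
      exact Set.mem_image_of_mem f hxy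
    · refine (congrArg g (Subtype.ext (map_inf f (x : L) y))).trans
        (hginf (e x) (e y) ?_)
      rw [he, he, ← map_inf]
      exact Set.mem_image_of_mem f hxy
  · rintro ⟨g, hg, hgsup, hginf⟩
    refine ⟨g ∘ e.symm, hg.comp e.symm.injective, fun u v huv => ?_, fun u v huv => ?_⟩
    · obtain ⟨x, rfl⟩ := e.surjective u
      obtain ⟨y, rfl⟩ := e.surjective v
      have hxy : (x : L) ⊔ y ∈ K := hf.mem_set_image.1 (by rwa [map_sup])
      have : e.symm ⟨_, huv⟩ = ⟨x ⊔ y, hxy⟩ := e.symm_apply_eq.2 (Subtype.ext (by simp [he]))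
      rw [Function.comp_apply, this]
      simpa only [Function.comp_apply, Equiv.symm_apply_apply] using hgsup x y hxy
    · obtain ⟨x, rfl⟩ := e.surjective u
      obtain ⟨y, rfl⟩ := e.surjective v
      have hxy : (x : L) ⊓ y ∈ K := hf.mem_set_image.1 (by rwa [map_inf])
      have : e.symm ⟨_, huv⟩ = ⟨x ⊓ y, hxy⟩ := e.symm_apply_eq.2 (Subtype.ext (by simp [he]))
      rw [Function.comp_apply, this]
      simpa only [Function.comp_apply, Equiv.symm_apply_apply] using hginf x y hxy

end PartialSublatEmbeds

namespace IsLatVariety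

variable {W : BLat.{u} → Prop}

theorem germ_mem (hW : IsLatVariety W) {X : BLat.{u}} (hX : W X) {ι : Type u}
    (l : Filter ι) : W ⟨l.Germ X⟩ := by
  let q : LatticeHom (ι → X) (l.Germ X) :=
    { toFun := (↑), map_sup' := fun _ _ => rfl, map_inf' := fun _ _ => rfl }
  exact hW.1 ⟨ι → X⟩ _ q (fun x => x.inductionOn fun f => ⟨f, rfl⟩)
    (hW.2.2 ι (fun _ => X) fun _ => hX)

theorem exists_finite_not_partialSublatEmbeds (hW : IsLatVariety W) {X : BLat.{u}}
    (hX : ¬ W X) : ∃ K : Set X, K.Finite ∧ ∀ M, W M → ¬ PartialSublatEmbeds K M := by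
  classical
  contrapose! hX
  replace hX : ∀ K : Finset X, ∃ M, W M ∧ PartialSublatEmbeds (K : Set X) M :=
    fun K => hX K K.finite_toSet
  rcases isEmpty_or_nonempty X with hempty | ⟨⟨a₀⟩⟩
  · obtain ⟨M, hM, -⟩ := hX ∅
    exact hW.2.1 X M ⟨⟨isEmptyElim, isEmptyElim⟩, isEmptyElim⟩ (fun a => isEmptyElim a) hM
  choose M hM e he_inj he_sup he_inf using fun K : Finset X => hX (insert a₀ K)
  let P : BLat.{u} := ⟨∀ K, M K⟩
  let c : P := fun K => e K ⟨a₀, Finset.mem_insert_self a₀ K⟩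
  -- `Filter.Germ` needs a single codomain, so the `K`-th embedding is placed in coordinate `K`
  -- of `P`.
  let f : X → Finset X → P := fun a K =>
    if ha : a ∈ insert a₀ K then Function.update c K (e K ⟨a, ha⟩) else c
  have hf : ∀ {a K} (ha : a ∈ K),
      f a K = Function.update c K (e K ⟨a, Finset.mem_insert_of_mem ha⟩) :=
    fun ha => dif_pos (Finset.mem_insert_of_mem ha)
  have hf_sup : ∀ a b, ∀ᶠ K in Filter.atTop, f (a ⊔ b) K = f a K ⊔ f b K := fun a b =>
    (Filter.eventually_ge_atTop {a, b, a ⊔ b}).mono fun K hK => by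
      rw [hf (hK (by simp)), hf (hK (by simp)), hf (hK (by simp)), ← Function.update_sup]
      exact congrArg _ (he_sup K ⟨a, _⟩ ⟨b, _⟩ _)
  have hf_inf : ∀ a b, ∀ᶠ K in Filter.atTop, f (a ⊓ b) K = f a K ⊓ f b K := fun a b =>
    (Filter.eventually_ge_atTop {a, b, a ⊓ b}).mono fun K hK => by
      rw [hf (hK (by simp)), hf (hK (by simp)), hf (hK (by simp)), ← Function.update_inf]
      exact congrArg _ (he_inf K ⟨a, _⟩ ⟨b, _⟩ _)
  let φ : LatticeHom X ((Filter.atTop : Filter (Finset X)).Germ P) :=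
    { toFun a := f a
      map_sup' a b := Filter.Germ.coe_eq.2 (hf_sup a b)
      map_inf' a b := Filter.Germ.coe_eq.2 (hf_inf a b) }
  refine hW.2.1 X _ φ (fun a b hab => ?_) (hW.germ_mem (hW.2.2 _ _ fun K => hM _) _)
  obtain ⟨K, hK, habK⟩ :=
    ((Filter.eventually_ge_atTop {a, b}).and (Filter.Germ.coe_eq.1 hab)).exists
  have := congrFun habK K
  rw [hf (hK (by simp)), hf (hK (by simp)), Function.update_self, Function.update_self] at this
  exact congrArg Subtype.val (he_inj K this)

end IsLatVariety

theorem Set.Countable.latticeClosure {α : Type*} [Lattice α] {s : Set α} (hs : s.Countable) :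
    (latticeClosure s).Countable := by
  let step : Set α → Set α := fun t => t ∪ Set.image2 (· ⊔ ·) t t ∪ Set.image2 (· ⊓ ·) t t
  have hstep : Monotone fun n => step^[n] s := monotone_nat_of_le_succ fun n => by
    rw [Function.iterate_succ_apply']
    exact fun x hx => Or.inl (Or.inl hx)
  have hsub : IsSublattice (⋃ n, step^[n] s) := by
    constructor
    all_goals
      intro a ha b hb
      obtain ⟨m, hm⟩ := Set.mem_iUnion.1 ha
      obtain ⟨n, hn⟩ := Set.mem_iUnion.1 hb
      refine Set.mem_iUnion.2 ⟨max m n + 1, ?_⟩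
      rw [Function.iterate_succ_apply']
    · exact Or.inl (Or.inr (Set.mem_image2_of_mem
        (hstep (le_max_left m n) hm) (hstep (le_max_right m n) hn)))
    · exact Or.inr (Set.mem_image2_of_mem
        (hstep (le_max_left m n) hm) (hstep (le_max_right m n) hn))
  refine Set.Countable.mono (latticeClosure_min (Set.subset_iUnion (step^[·] s) 0) hsub)
    (Set.countable_iUnion fun n => ?_)
  induction n with
  | zero => exact hs
  | succ n ih =>
    rw [Function.iterate_succ_apply']
    exact (ih.union (ih.image2 ih _)).union (ih.image2 ih _)

namespace IsBddLatVariety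

variable {V : BdLat.{u} → Prop}

theorem prod_mem (hV : IsBddLatVariety V) {A B : BdLat.{u}} (hA : V A) (hB : V B) :
    V ⟨A × B⟩ := by
  let F : ULift.{u} Bool → BdLat.{u} := fun b => bif b.down then A else B
  let π : BoundedLatticeHom (∀ b, F b) (A × B) :=
    { toFun p := (p ⟨true⟩, p ⟨false⟩), map_sup' _ _ := rfl, map_inf' _ _ := rfl,
      map_top' := rfl, map_bot' := rfl }
  refine hV.1 ⟨∀ b, F b⟩ _ π (fun p => ⟨fun | ⟨true⟩ => p.1 | ⟨false⟩ => p.2, rfl⟩) ?_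
  exact hV.2.2 _ F fun | ⟨true⟩ => hA | ⟨false⟩ => hB

theorem exists_countable_partialSublatEmbeds (hV : IsBddLatVariety V) {X : BdLat.{u}}
    (hX : V X) {K : Set X} (hK : K.Finite) (hbot : ⊥ ∈ K) (htop : ⊤ ∈ K) :
    ∃ L : BdLat.{u}, V L ∧ Countable L ∧ ∃ K' : Set L, K'.Finite ∧ ⊥ ∈ K' ∧ ⊤ ∈ K' ∧
      ∀ (M : Type v) [Lattice M], PartialSublatEmbeds K' M → PartialSublatEmbeds K M := by
  have hsup : ∀ ⦃x y⦄, x ∈ latticeClosure K → y ∈ latticeClosure K → x ⊔ y ∈ latticeClosure K :=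
    fun _ _ hx hy => isSublattice_latticeClosure.supClosed hx hy
  have hinf : ∀ ⦃x y⦄, x ∈ latticeClosure K → y ∈ latticeClosure K → x ⊓ y ∈ latticeClosure K :=
    fun _ _ hx hy => isSublattice_latticeClosure.infClosed hx hy
  let i := BoundedLatticeHom.subtypeVal (subset_latticeClosure hbot)
    (subset_latticeClosure htop) hsup hinf
  let _ := Subtype.lattice hsup hinf
  let _ := Subtype.boundedOrder (subset_latticeClosure hbot) (subset_latticeClosure htop)
  refine ⟨⟨latticeClosure K⟩, hV.2.1 _ X i Subtype.val_injective hX,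
    hK.countable.latticeClosure.to_subtype, Subtype.val ⁻¹' K,
    hK.preimage Subtype.val_injective.injOn, hbot, htop, fun M _ hM => ?_⟩
  have hK' : ((↑) : latticeClosure K → X) '' ((↑) ⁻¹' K) = K := by
    rw [Subtype.image_preimage_coe, Set.inter_eq_right.2 subset_latticeClosure]
  exact hK' ▸ (PartialSublatEmbeds.image_iff i.toLatticeHom Subtype.val_injective).2 hM

end IsBddLatVariety

section EdgeSet

variable {A B M : Type*} [Lattice A] [BoundedOrder A] [Lattice B] [BoundedOrder B] [Lattice M]
  {K₁ : Set A} {K₂ : Set Bᵒᵈ}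

def edgeSet (K₁ : Set A) (K₂ : Set Bᵒᵈ) : Set (A × B) :=
  insert ⊥ (insert ⊤ ((fun x => (x, ⊥)) '' K₁ ∪ (fun y => (⊤, ofDual y)) '' K₂))

theorem edgeSet_finite (h₁ : K₁.Finite) (h₂ : K₂.Finite) : (edgeSet K₁ K₂).Finite :=
  (((h₁.image _).union (h₂.image _)).insert _).insert _

theorem bot_mem_edgeSet : ⊥ ∈ edgeSet K₁ K₂ := Set.mem_insert _ _

theorem top_mem_edgeSet : ⊤ ∈ edgeSet K₁ K₂ := Set.mem_insert_of_mem _ (Set.mem_insert _ _)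

theorem PartialSublatEmbeds.of_edgeSet_left (h : PartialSublatEmbeds (edgeSet K₁ K₂) M) :
    PartialSublatEmbeds K₁ M := by
  let f : LatticeHom A (A × B) :=
    { toFun x := (x, ⊥), map_sup' _ _ := by simp, map_inf' _ _ := by simp }
  refine (PartialSublatEmbeds.image_iff f fun x y hxy => congrArg Prod.fst hxy).1 (h.mono ?_)
  rintro _ ⟨x, hx, rfl⟩
  exact Set.mem_insert_of_mem _ (Set.mem_insert_of_mem _ (Or.inl ⟨x, hx, rfl⟩))

theorem PartialSublatEmbeds.of_edgeSet_right (h : PartialSublatEmbeds (edgeSet K₁ K₂) M) :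
    PartialSublatEmbeds K₂ Mᵒᵈ := by
  let f : LatticeHom B (A × B) :=
    { toFun y := (⊤, y), map_sup' _ _ := by simp, map_inf' _ _ := by simp }
  refine (PartialSublatEmbeds.image_iff (LatticeHom.dual f)
    fun x y hxy => congrArg Prod.snd hxy).1 (h.dual.mono ?_)
  rintro _ ⟨y, hy, rfl⟩
  exact Set.mem_insert_of_mem _ (Set.mem_insert_of_mem _ (Or.inr ⟨y, hy, rfl⟩))

end EdgeSet

/-- Let `V` be a variety of bounded lattices and `W` a variety of lattices. If `V ⊄ W` and
`V ⊄ Wᵈ`, then there are a countable bounded lattice `L ∈ V` and a finite spanning partial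
sublattice `K` of `L` that is not a partial sublattice of any member of `W ∪ Wᵈ`. -/
theorem exists_partial_sublattice_not_embeddable
    (V : BdLat.{0} → Prop) (W : BLat.{0} → Prop)
    (hV : IsBddLatVariety V) (hW : IsLatVariety W)
    (hVW : ∃ A : BdLat.{0}, V A ∧ ¬ W A.toBLat)
    (hVWd : ∃ A : BdLat.{0}, V A ∧ ¬ W A.toBLat.dual) :
    ∃ L : BdLat.{0}, V L ∧ Countable ↥L ∧
      ∃ K : Set ↥L, K.Finite ∧ (⊥ : ↥L) ∈ K ∧ (⊤ : ↥L) ∈ K ∧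
        ∀ M : BLat.{0}, W M ∨ W M.dual → ¬ PartialSublatEmbeds K ↥M := by
  obtain ⟨A, hAV, hAW⟩ := hVW
  obtain ⟨B, hBV, hBW⟩ := hVWd
  obtain ⟨K₁, hK₁, hK₁W⟩ := hW.exists_finite_not_partialSublatEmbeds hAW
  obtain ⟨K₂, hK₂, hK₂W⟩ := hW.exists_finite_not_partialSublatEmbeds hBW
  obtain ⟨L, hLV, hL, K, hK, hbot, htop, hKM⟩ :=
    hV.exists_countable_partialSublatEmbeds (hV.prod_mem hAV hBV)
      (edgeSet_finite (B := B) hK₁ hK₂) bot_mem_edgeSet top_mem_edgeSet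
  refine ⟨L, hLV, hL, K, hK, hbot, htop, ?_⟩
  rintro M (hM | hM) hKM'
  · exact hK₁W M hM (hKM M hKM').of_edgeSet_left
  · exact hK₂W M.dual hM (hKM M hKM').of_edgeSet_right
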